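/- Let (f,g,h) be a map of triangles from a distinguished triangle X →u Y →v Z →w ΣX to a distinguished triangle X' →u' Y' →v' Z' →w' ΣX'. If the source triangle is contractible or the target triangle is contractible, then (f,g,h) is both good and Verdier good. -/

import Mathlib

open CategoryTheory Category Limits Pretriangulated

universe v u

variable {C : Type u} [Category.{v} C] [Preadditive C] [HasZeroObject C]
  [HasShift C ℤ] [∀ n : ℤ, (shiftFunctor C n).Additive] [Pretriangulated C]
  [IsTriangulated C] [HasBinaryBiproducts C]

noncomputable local instance (n : ℤ) : PreservesBinaryBiproducts (shiftFunctor C n) :=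
  preservesBinaryBiproducts_of_preservesBiproducts _

/-- The condition that `(f, g, h)` is a morphism of triangles from `T` to `T'`. -/
def IsTriMap (T T' : Triangle C) (f : T.obj₁ ⟶ T'.obj₁) (g : T.obj₂ ⟶ T'.obj₂)
    (h : T.obj₃ ⟶ T'.obj₃) : Prop :=
  T.mor₁ ≫ g = f ≫ T'.mor₁ ∧ T.mor₂ ≫ h = g ≫ T'.mor₂ ∧
    T.mor₃ ≫ f⟦(1 : ℤ)⟧' = h ≫ T'.mor₃

/-- The mapping cone of a morphism of triangles. -/
noncomputable def mappingCone (T T' : Triangle C) (f : T.obj₁ ⟶ T'.obj₁)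
    (g : T.obj₂ ⟶ T'.obj₂) (h : T.obj₃ ⟶ T'.obj₃) : Triangle C :=
  Triangle.mk
    (biprod.desc (biprod.lift T'.mor₁ 0) (biprod.lift g (-T.mor₂)) :
      T'.obj₁ ⊞ T.obj₂ ⟶ T'.obj₂ ⊞ T.obj₃)
    (biprod.desc (biprod.lift T'.mor₂ 0) (biprod.lift h (-T.mor₃)) :
      T'.obj₂ ⊞ T.obj₃ ⟶ T'.obj₃ ⊞ T.obj₁⟦(1 : ℤ)⟧)
    (biprod.desc (biprod.lift T'.mor₃ 0)
        (biprod.lift (f⟦(1 : ℤ)⟧') (-(T.mor₁⟦(1 : ℤ)⟧'))) ≫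
      ((shiftFunctor C (1 : ℤ)).mapBiprod T'.obj₁ T.obj₂).inv)

/-- A morphism of triangles is good if its mapping cone is distinguished. -/
noncomputable def IsGood (T T' : Triangle C) (f : T.obj₁ ⟶ T'.obj₁)
    (g : T.obj₂ ⟶ T'.obj₂) (h : T.obj₃ ⟶ T'.obj₃) : Prop :=
  mappingCone T T' f g h ∈ distTriang C

/-- An octahedron on composable maps `a`, `b`, given distinguished triangles
`(a, p₁, q₁)`, `(b, p₂, q₂)` and `(a ≫ b, p₃, q₃)`, is a pair `(m, n)` as below. -/
def IsOctahedron {A₁ A₂ A₃ B₁ B₂ B₃ : C} (a : A₁ ⟶ A₂) (b : A₂ ⟶ A₃)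
    (p₁ : A₂ ⟶ B₁) (q₁ : B₁ ⟶ A₁⟦(1 : ℤ)⟧)
    (p₂ : A₃ ⟶ B₂) (q₂ : B₂ ⟶ A₂⟦(1 : ℤ)⟧)
    (p₃ : A₃ ⟶ B₃) (q₃ : B₃ ⟶ A₁⟦(1 : ℤ)⟧)
    (m : B₁ ⟶ B₃) (n : B₃ ⟶ B₂) : Prop :=
  p₁ ≫ m = b ≫ p₃ ∧ m ≫ q₃ = q₁ ∧ p₃ ≫ n = p₂ ∧ n ≫ q₂ = q₃ ≫ a⟦(1 : ℤ)⟧' ∧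
    (Triangle.mk m n (q₂ ≫ p₁⟦(1 : ℤ)⟧') ∈ distTriang C)

/-- A morphism of triangles `(f, g, h)` is Verdier good if `h` arises from Verdier's
construction via two octahedra on the composite `g ∘ u = u' ∘ f`. -/
def IsVerdierGood (T T' : Triangle C) (f : T.obj₁ ⟶ T'.obj₁) (g : T.obj₂ ⟶ T'.obj₂)
    (h : T.obj₃ ⟶ T'.obj₃) : Prop :=
  ∃ (A Y'' X'' : C) (vt : T'.obj₂ ⟶ A) (wt : A ⟶ T.obj₁⟦(1 : ℤ)⟧)
    (g' : T'.obj₂ ⟶ Y'') (g'' : Y'' ⟶ T.obj₂⟦(1 : ℤ)⟧)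
    (f' : T'.obj₁ ⟶ X'') (f'' : X'' ⟶ T.obj₁⟦(1 : ℤ)⟧)
    (α₁ : T.obj₃ ⟶ A) (β₁ : A ⟶ Y'') (α₂ : X'' ⟶ A) (β₂ : A ⟶ T'.obj₃),
    (Triangle.mk (T.mor₁ ≫ g) vt wt ∈ distTriang C) ∧
    (Triangle.mk g g' g'' ∈ distTriang C) ∧
    (Triangle.mk f f' f'' ∈ distTriang C) ∧
    IsOctahedron T.mor₁ g T.mor₂ T.mor₃ g' g'' vt wt α₁ β₁ ∧
    IsOctahedron f T'.mor₁ f' f'' T'.mor₂ T'.mor₃ vt wt α₂ β₂ ∧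
    h = α₁ ≫ β₂

/-- The morphism of triangles `(f, g, h)` is nullhomotopic, in the (equivalent)
`Σ`-applied formulation of the first equation. -/
def IsNullHomotopic (T T' : Triangle C) (f : T.obj₁ ⟶ T'.obj₁) (g : T.obj₂ ⟶ T'.obj₂)
    (h : T.obj₃ ⟶ T'.obj₃) : Prop :=
  ∃ (F : T.obj₂ ⟶ T'.obj₁) (G : T.obj₃ ⟶ T'.obj₂) (H : T.obj₁⟦(1 : ℤ)⟧ ⟶ T'.obj₃),
    f⟦(1 : ℤ)⟧' = T.mor₁⟦(1 : ℤ)⟧' ≫ F⟦(1 : ℤ)⟧' + H ≫ T'.mor₃ ∧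
    g = T.mor₂ ≫ G + F ≫ T'.mor₁ ∧
    h = T.mor₃ ≫ H + G ≫ T'.mor₂

/-- A triangle is contractible if its identity morphism is nullhomotopic. -/
def IsContractible (T : Triangle C) : Prop :=
  IsNullHomotopic T T (𝟙 T.obj₁) (𝟙 T.obj₂) (𝟙 T.obj₃)

/-- A morphism of triangles is middling good if it extends to a 4 × 4 diagram. -/
def IsMiddlingGood (T T' : Triangle C) (f : T.obj₁ ⟶ T'.obj₁) (g : T.obj₂ ⟶ T'.obj₂)
    (h : T.obj₃ ⟶ T'.obj₃) : Prop :=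
  ∃ (X'' Y'' Z'' : C)
    (f' : T'.obj₁ ⟶ X'') (f'' : X'' ⟶ T.obj₁⟦(1 : ℤ)⟧)
    (g' : T'.obj₂ ⟶ Y'') (g'' : Y'' ⟶ T.obj₂⟦(1 : ℤ)⟧)
    (h' : T'.obj₃ ⟶ Z'') (h'' : Z'' ⟶ T.obj₃⟦(1 : ℤ)⟧)
    (u'' : X'' ⟶ Y'') (v'' : Y'' ⟶ Z'') (w'' : Z'' ⟶ X''⟦(1 : ℤ)⟧),
    (Triangle.mk f f' f'' ∈ distTriang C) ∧
    (Triangle.mk g g' g'' ∈ distTriang C) ∧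
    (Triangle.mk h h' h'' ∈ distTriang C) ∧
    (Triangle.mk u'' v'' w'' ∈ distTriang C) ∧
    T'.mor₁ ≫ g' = f' ≫ u'' ∧
    T'.mor₂ ≫ h' = g' ≫ v'' ∧
    T'.mor₃ ≫ f'⟦(1 : ℤ)⟧' = h' ≫ w'' ∧
    u'' ≫ g'' = f'' ≫ T.mor₁⟦(1 : ℤ)⟧' ∧
    v'' ≫ h'' = g'' ≫ T.mor₂⟦(1 : ℤ)⟧' ∧
    h'' ≫ T.mor₃⟦(1 : ℤ)⟧' = -(w'' ≫ f''⟦(1 : ℤ)⟧')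

/-- A candidate triangle `(a, b, c)` is replaceably exact if each of its three maps
can be replaced to give a distinguished triangle. -/
def ReplaceablyExact {A B D : C} (a : A ⟶ B) (b : B ⟶ D) (c : D ⟶ A⟦(1 : ℤ)⟧) : Prop :=
  (∃ a' : A ⟶ B, Triangle.mk a' b c ∈ distTriang C) ∧
  (∃ b' : B ⟶ D, Triangle.mk a b' c ∈ distTriang C) ∧
  (∃ c' : D ⟶ A⟦(1 : ℤ)⟧, Triangle.mk a b c' ∈ distTriang C)

set_option linter.unusedSectionVars false

/-- biprod vs product over WalkingPair -/
noncomputable def biprodPiIso (f : WalkingPair → C) :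
    (f WalkingPair.left) ⊞ (f WalkingPair.right) ≅ ∏ᶜ f where
  hom := Pi.lift (fun j => WalkingPair.casesOn j biprod.fst biprod.snd)
  inv := biprod.lift (Pi.π f WalkingPair.left) (Pi.π f WalkingPair.right)
  hom_inv_id := by apply biprod.hom_ext <;> simp
  inv_hom_id := by
    refine limit.hom_ext ?_
    rintro ⟨(_|_)⟩ <;> simp

@[simp] lemma biprodPiIso_hom_π_left (f : WalkingPair → C) :
    (biprodPiIso f).hom ≫ Pi.π f WalkingPair.left = biprod.fst := by simp [biprodPiIso]

@[simp] lemma biprodPiIso_hom_π_right (f : WalkingPair → C) :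
    (biprodPiIso f).hom ≫ Pi.π f WalkingPair.right = biprod.snd := by simp [biprodPiIso]

lemma biprodTriangle_distinguished (T₁ T₂ : Triangle C)
    (h₁ : T₁ ∈ distTriang C) (h₂ : T₂ ∈ distTriang C) :
    Triangle.mk (biprod.map T₁.mor₁ T₂.mor₁) (biprod.map T₁.mor₂ T₂.mor₂)
      (biprod.map T₁.mor₃ T₂.mor₃ ≫ ((shiftFunctor C (1 : ℤ)).mapBiprod T₁.obj₁ T₂.obj₁).inv)
      ∈ distTriang C := by
  let T : WalkingPair → Triangle C := fun j => WalkingPair.casesOn j T₁ T₂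
  have hT : ∀ j, T j ∈ distTriang C := by rintro (_|_) <;> assumption
  refine isomorphic_distinguished _ (productTriangle_distinguished T hT) _ ?_
  refine Triangle.isoMk _ _ (biprodPiIso (fun j => (T j).obj₁))
    (biprodPiIso (fun j => (T j).obj₂)) (biprodPiIso (fun j => (T j).obj₃)) ?_ ?_ ?_
  · show biprod.map T₁.mor₁ T₂.mor₁ ≫ (biprodPiIso (fun j => (T j).obj₂)).hom =
      (biprodPiIso (fun j => (T j).obj₁)).hom ≫ Limits.Pi.map (fun j => (T j).mor₁)
    refine limit.hom_ext ?_
    rintro ⟨(_|_)⟩ <;> simp [T, biprodPiIso]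
  · show biprod.map T₁.mor₂ T₂.mor₂ ≫ (biprodPiIso (fun j => (T j).obj₃)).hom =
      (biprodPiIso (fun j => (T j).obj₂)).hom ≫ Limits.Pi.map (fun j => (T j).mor₂)
    refine limit.hom_ext ?_
    rintro ⟨(_|_)⟩ <;> simp [T, biprodPiIso]
  · show (biprod.map T₁.mor₃ T₂.mor₃ ≫ ((shiftFunctor C (1 : ℤ)).mapBiprod T₁.obj₁ T₂.obj₁).inv) ≫
      (biprodPiIso (fun j => (T j).obj₁)).hom⟦(1 : ℤ)⟧' =
      (biprodPiIso (fun j => (T j).obj₃)).hom ≫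
        (Limits.Pi.map (fun j => (T j).mor₃) ≫ inv (piComparison _ _))
    rw [← cancel_mono (piComparison (shiftFunctor C (1 : ℤ)) (fun j => (T j).obj₁))]
    simp only [assoc, IsIso.inv_hom_id, comp_id]
    refine limit.hom_ext ?_
    rintro ⟨(_|_)⟩ <;>
    · simp only [assoc, piComparison_comp_π, ← Functor.map_comp, limMap_π]
      apply biprod.hom_ext'
      · simp [biprodPiIso, ← Functor.map_comp, T]
        erw [biprod.inl_desc_assoc]
        simp [← Functor.map_comp]
      · simp [biprodPiIso, ← Functor.map_comp, T]
        erw [biprod.inr_desc_assoc]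
        simp [← Functor.map_comp]


-- shear isomorphism component
noncomputable def shearIso {P Q : C} (F : Q ⟶ P) : P ⊞ Q ≅ P ⊞ Q where
  hom := biprod.desc biprod.inl (biprod.lift F (𝟙 Q))
  inv := biprod.desc biprod.inl (biprod.lift (-F) (𝟙 Q))
  hom_inv_id := by
    apply biprod.hom_ext' <;> apply biprod.hom_ext <;> simp
  inv_hom_id := by
    apply biprod.hom_ext' <;> apply biprod.hom_ext <;> simp

lemma shear_comm {P Q P' Q' : C} (F : Q ⟶ P) (G : Q' ⟶ P') (a : P ⟶ P') (b : Q ⟶ Q')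
    (c : Q ⟶ P') (hc : c + b ≫ G = F ≫ a) :
    biprod.desc (biprod.lift a 0) (biprod.lift c b) ≫ (shearIso G).hom
      = (shearIso F).hom ≫ biprod.map a b := by
  apply biprod.hom_ext' <;> apply biprod.hom_ext <;>
    simp [shearIso, ← hc]

lemma mapBiprod_inv_shear {P Q : C} (F : Q ⟶ P) :
    ((shiftFunctor C (1 : ℤ)).mapBiprod P Q).inv ≫ (shiftFunctor C (1 : ℤ)).map (shearIso F).hom
      = (shearIso ((shiftFunctor C (1 : ℤ)).map F)).hom
          ≫ ((shiftFunctor C (1 : ℤ)).mapBiprod P Q).inv := by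
  apply biprod.hom_ext' <;> simp only [Functor.mapBiprod_inv, shearIso]
  · erw [biprod.inl_desc_assoc, biprod.inl_desc_assoc, biprod.inl_desc]
    simp [← Functor.map_comp]
  · erw [biprod.inr_desc_assoc, biprod.inr_desc_assoc, biprod.lift_desc]
    rw [← Functor.map_comp, biprod.inr_desc]
    simp [biprod.lift_eq]

lemma isGood_of_nullhomotopic {X Y Z X' Y' Z' : C}
    (u : X ⟶ Y) (v : Y ⟶ Z) (w : Z ⟶ X⟦(1 : ℤ)⟧)
    (u' : X' ⟶ Y') (v' : Y' ⟶ Z') (w' : Z' ⟶ X'⟦(1 : ℤ)⟧)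
    (hT : Triangle.mk u v w ∈ distTriang C)
    (hT' : Triangle.mk u' v' w' ∈ distTriang C)
    (f : X ⟶ X') (g : Y ⟶ Y') (h : Z ⟶ Z')
    (hn : ∃ (F : Y ⟶ X') (G : Z ⟶ Y') (H : X⟦(1 : ℤ)⟧ ⟶ Z'),
      f⟦(1 : ℤ)⟧' = u⟦(1 : ℤ)⟧' ≫ F⟦(1 : ℤ)⟧' + H ≫ w' ∧
      g = v ≫ G + F ≫ u' ∧ h = w ≫ H + G ≫ v') :
    Triangle.mk
      (biprod.desc (biprod.lift u' 0) (biprod.lift g (-v)) : X' ⊞ Y ⟶ Y' ⊞ Z)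
      (biprod.desc (biprod.lift v' 0) (biprod.lift h (-w)) : Y' ⊞ Z ⟶ Z' ⊞ X⟦(1 : ℤ)⟧)
      (biprod.desc (biprod.lift w' 0) (biprod.lift (f⟦(1 : ℤ)⟧') (-(u⟦(1 : ℤ)⟧')))
        ≫ ((shiftFunctor C (1 : ℤ)).mapBiprod X' Y).inv) ∈ distTriang C := by
  obtain ⟨F, G, H, hF, hG, hH⟩ := hn
  have hneg : Triangle.mk (-v) (-w) (-(u⟦(1 : ℤ)⟧')) ∈ distTriang C := by
    refine isomorphic_distinguished _ (rot_of_distTriang _ hT) _ ?_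
    refine Triangle.isoMk _ _ (Iso.mk (-𝟙 Y) (-𝟙 Y) (by simp) (by simp) : Y ≅ Y) (Iso.refl _)
      (Iso.mk (-𝟙 (X⟦(1 : ℤ)⟧)) (-𝟙 _) (by simp) (by simp) : X⟦(1 : ℤ)⟧ ≅ X⟦(1 : ℤ)⟧) ?_ ?_ ?_
    · show (-v) ≫ 𝟙 Z = (-𝟙 Y) ≫ v
      simp
    · show (-w) ≫ (-𝟙 (X⟦(1 : ℤ)⟧)) = 𝟙 Z ≫ w
      simp
    · show (-(u⟦(1 : ℤ)⟧')) ≫ (-𝟙 Y)⟦(1 : ℤ)⟧' = (-𝟙 (X⟦(1 : ℤ)⟧)) ≫ (-(u⟦(1 : ℤ)⟧'))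
      simp
  have hP := biprodTriangle_distinguished (Triangle.mk u' v' w')
    (Triangle.mk (-v) (-w) (-(u⟦(1 : ℤ)⟧'))) hT' hneg
  refine isomorphic_distinguished _ hP _ ?_
  refine Triangle.isoMk _ _ (shearIso F) (shearIso G) (shearIso H) ?_ ?_ ?_
  · exact shear_comm F G u' (-v) g (by rw [hG]; simp)
  · exact shear_comm G H v' (-w) h (by rw [hH]; simp)
  · show (biprod.desc (biprod.lift w' 0) (biprod.lift (f⟦(1 : ℤ)⟧') (-(u⟦(1 : ℤ)⟧'))) ≫
        ((shiftFunctor C (1 : ℤ)).mapBiprod X' Y).inv) ≫ (shearIso F).hom⟦(1 : ℤ)⟧' =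
      (shearIso H).hom ≫ (biprod.map w' (-(u⟦(1 : ℤ)⟧')) ≫
        ((shiftFunctor C (1 : ℤ)).mapBiprod X' Y).inv)
    rw [assoc, mapBiprod_inv_shear, ← assoc, ← assoc]
    congr 1
    exact shear_comm H ((shiftFunctor C (1 : ℤ)).map F) w' (-(u⟦(1 : ℤ)⟧')) (f⟦(1 : ℤ)⟧')
      (by rw [hF]; simp)


theorem stmt_3 {X Y Z X' Y' Z' : C}
    (u : X ⟶ Y) (v : Y ⟶ Z) (w : Z ⟶ X⟦(1 : ℤ)⟧)
    (u' : X' ⟶ Y') (v' : Y' ⟶ Z') (w' : Z' ⟶ X'⟦(1 : ℤ)⟧)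
    (hT : Triangle.mk u v w ∈ distTriang C)
    (hT' : Triangle.mk u' v' w' ∈ distTriang C)
    (f : X ⟶ X') (g : Y ⟶ Y') (h : Z ⟶ Z')
    (hmap : IsTriMap (Triangle.mk u v w) (Triangle.mk u' v' w') f g h)
    (hcontr : IsContractible (Triangle.mk u v w) ∨ IsContractible (Triangle.mk u' v' w')) :
    IsGood (Triangle.mk u v w) (Triangle.mk u' v' w') f g h ∧ IsVerdierGood (Triangle.mk u v w) (Triangle.mk u' v' w') f g h := by
  obtain ⟨hm₁, hm₂, hm₃⟩ := hmap
  change u ≫ g = f ≫ u' at hm₁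
  change v ≫ h = g ≫ v' at hm₂
  change w ≫ f⟦(1 : ℤ)⟧' = h ≫ w' at hm₃
  have hcontr' : (∃ (F₀ : Y ⟶ X) (G₀ : Z ⟶ Y) (H₀ : X⟦(1 : ℤ)⟧ ⟶ Z),
      (𝟙 X)⟦(1 : ℤ)⟧' = u⟦(1 : ℤ)⟧' ≫ F₀⟦(1 : ℤ)⟧' + H₀ ≫ w ∧
      𝟙 Y = v ≫ G₀ + F₀ ≫ u ∧ 𝟙 Z = w ≫ H₀ + G₀ ≫ v) ∨
    (∃ (F₁ : Y' ⟶ X') (G₁ : Z' ⟶ Y') (H₁ : X'⟦(1 : ℤ)⟧ ⟶ Z'),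
      (𝟙 X')⟦(1 : ℤ)⟧' = u'⟦(1 : ℤ)⟧' ≫ F₁⟦(1 : ℤ)⟧' + H₁ ≫ w' ∧
      𝟙 Y' = v' ≫ G₁ + F₁ ≫ u' ∧ 𝟙 Z' = w' ≫ H₁ + G₁ ≫ v') := hcontr
  -- the morphism of triangles is nullhomotopic
  have hnull : ∃ (F : Y ⟶ X') (G : Z ⟶ Y') (H : X⟦(1 : ℤ)⟧ ⟶ Z'),
      f⟦(1 : ℤ)⟧' = u⟦(1 : ℤ)⟧' ≫ F⟦(1 : ℤ)⟧' + H ≫ w' ∧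
      g = v ≫ G + F ≫ u' ∧ h = w ≫ H + G ≫ v' := by
    obtain ⟨F₀, G₀, H₀, e₁, e₂, e₃⟩ | ⟨F₁, G₁, H₁, e₁, e₂, e₃⟩ := hcontr'
    · refine ⟨F₀ ≫ f, G₀ ≫ g, H₀ ≫ h, ?_, ?_, ?_⟩
      · calc f⟦(1 : ℤ)⟧' = (𝟙 X)⟦(1 : ℤ)⟧' ≫ f⟦(1 : ℤ)⟧' := by simp
          _ = (u⟦(1 : ℤ)⟧' ≫ F₀⟦(1 : ℤ)⟧' + H₀ ≫ w) ≫ f⟦(1 : ℤ)⟧' := by rw [e₁]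
          _ = u⟦(1 : ℤ)⟧' ≫ (F₀ ≫ f)⟦(1 : ℤ)⟧' + (H₀ ≫ h) ≫ w' := by
              simp only [Preadditive.add_comp, assoc, Functor.map_comp, hm₃]
      · calc g = 𝟙 Y ≫ g := by simp
          _ = (v ≫ G₀ + F₀ ≫ u) ≫ g := by rw [e₂]
          _ = v ≫ (G₀ ≫ g) + (F₀ ≫ f) ≫ u' := by
              simp only [Preadditive.add_comp, assoc]; rw [hm₁]
      · calc h = 𝟙 Z ≫ h := by simp
          _ = (w ≫ H₀ + G₀ ≫ v) ≫ h := by rw [e₃]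
          _ = w ≫ (H₀ ≫ h) + (G₀ ≫ g) ≫ v' := by
              simp only [Preadditive.add_comp, assoc]; rw [hm₂]
    · refine ⟨g ≫ F₁, h ≫ G₁, f⟦(1 : ℤ)⟧' ≫ H₁, ?_, ?_, ?_⟩
      · calc f⟦(1 : ℤ)⟧' = f⟦(1 : ℤ)⟧' ≫ (𝟙 X')⟦(1 : ℤ)⟧' := by simp
          _ = f⟦(1 : ℤ)⟧' ≫ (u'⟦(1 : ℤ)⟧' ≫ F₁⟦(1 : ℤ)⟧' + H₁ ≫ w') := by rw [e₁]
          _ = u⟦(1 : ℤ)⟧' ≫ (g ≫ F₁)⟦(1 : ℤ)⟧' + (f⟦(1 : ℤ)⟧' ≫ H₁) ≫ w' := by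
              rw [Preadditive.comp_add, ← Functor.map_comp_assoc, ← hm₁]
              simp only [Functor.map_comp, assoc]
      · calc g = g ≫ 𝟙 Y' := by simp
          _ = g ≫ (v' ≫ G₁ + F₁ ≫ u') := by rw [e₂]
          _ = v ≫ (h ≫ G₁) + (g ≫ F₁) ≫ u' := by
              simp only [Preadditive.comp_add, ← assoc]; rw [← hm₂]
      · calc h = h ≫ 𝟙 Z' := by simp
          _ = h ≫ (w' ≫ H₁ + G₁ ≫ v') := by rw [e₃]
          _ = w ≫ (f⟦(1 : ℤ)⟧' ≫ H₁) + (h ≫ G₁) ≫ v' := by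
              simp only [Preadditive.comp_add, ← assoc]; rw [← hm₃]
  constructor
  · exact isGood_of_nullhomotopic u v w u' v' w' hT hT' f g h hnull
  · -- Verdier goodness
    obtain ⟨A, vt, wt, hA⟩ := distinguished_cocone_triangle (u ≫ g)
    obtain ⟨Y'', g', g'', hg⟩ := distinguished_cocone_triangle g
    obtain ⟨X'', f', f'', hf⟩ := distinguished_cocone_triangle f
    have O₁ := Triangulated.someOctahedron rfl hT hg hA
    have O₂ := Triangulated.someOctahedron hm₁.symm hf hT' hA
    have hvtwt : vt ≫ wt = 0 := comp_distTriang_mor_zero₂₃ _ hA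
    have hδv : v ≫ (h - O₁.m₁ ≫ O₂.m₃) = 0 := by
      have c₁ : v ≫ O₁.m₁ = g ≫ vt := O₁.comm₁
      have c₃ : vt ≫ O₂.m₃ = v' := O₂.comm₃
      rw [Preadditive.comp_sub, hm₂, ← assoc, c₁, assoc, c₃, sub_self]
    have hδw : (h - O₁.m₁ ≫ O₂.m₃) ≫ w' = 0 := by
      have c₂ : O₁.m₁ ≫ wt = w := O₁.comm₂
      have c₄ : wt ≫ f⟦(1 : ℤ)⟧' = O₂.m₃ ≫ w' := O₂.comm₄
      rw [Preadditive.sub_comp, assoc, ← c₄, ← assoc, c₂, hm₃, sub_self]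
    obtain ⟨θ, hθ⟩ : ∃ θ : X⟦(1 : ℤ)⟧ ⟶ Y', w ≫ θ ≫ v' = h - O₁.m₁ ≫ O₂.m₃ := by
      obtain ⟨F₀, G₀, H₀, e₁, e₂, e₃⟩ | ⟨F₁, G₁, H₁, e₁, e₂, e₃⟩ := hcontr'
      · obtain ⟨ρ, hρ⟩ : ∃ ρ : Z ⟶ Y', h - O₁.m₁ ≫ O₂.m₃ = ρ ≫ v' :=
          Triangle.coyoneda_exact₃ _ hT' (h - O₁.m₁ ≫ O₂.m₃) hδw
        refine ⟨H₀ ≫ ρ, ?_⟩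
        rw [assoc, ← hρ]
        calc w ≫ H₀ ≫ (h - O₁.m₁ ≫ O₂.m₃)
            = (𝟙 Z - G₀ ≫ v) ≫ (h - O₁.m₁ ≫ O₂.m₃) := by
              rw [← assoc]; congr 1; rw [eq_sub_iff_add_eq, ← e₃]
          _ = h - O₁.m₁ ≫ O₂.m₃ := by
              rw [Preadditive.sub_comp, id_comp, assoc, hδv, comp_zero, sub_zero]
      · obtain ⟨θ, hθ⟩ : ∃ θ : X⟦(1 : ℤ)⟧ ⟶ Z', h - O₁.m₁ ≫ O₂.m₃ = w ≫ θ :=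
          Triangle.yoneda_exact₃ _ hT (h - O₁.m₁ ≫ O₂.m₃) hδv
        refine ⟨θ ≫ G₁, ?_⟩
        rw [assoc, ← assoc, ← hθ]
        calc (h - O₁.m₁ ≫ O₂.m₃) ≫ G₁ ≫ v'
            = (h - O₁.m₁ ≫ O₂.m₃) ≫ (𝟙 Z' - w' ≫ H₁) := by
              congr 1; rw [eq_sub_iff_add_eq, add_comm, ← e₃]
          _ = h - O₁.m₁ ≫ O₂.m₃ := by
              rw [Preadditive.comp_sub, comp_id, ← assoc, hδw, zero_comp, sub_zero]
    set σ : A ⟶ A := wt ≫ θ ≫ vt with hσ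
    have hσσ : σ ≫ σ = 0 := by simp [hσ, reassoc_of% hvtwt]
    have hvtσ : vt ≫ σ = 0 := by simp [hσ, reassoc_of% hvtwt]
    have hσwt : σ ≫ wt = 0 := by simp [hσ, assoc, hvtwt]
    have hO₂m₁ : f' ≫ O₂.m₁ = u' ≫ vt := O₂.comm₁
    have hO₂m₂ : O₂.m₁ ≫ wt = f'' := O₂.comm₂
    have hO₂m₃ : vt ≫ O₂.m₃ = v' := O₂.comm₃
    have hO₂m₄ : wt ≫ f⟦(1 : ℤ)⟧' = O₂.m₃ ≫ w' := O₂.comm₄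
    have hO₁m₂ : O₁.m₁ ≫ wt = w := O₁.comm₂
    have hinv₁ : (𝟙 A - σ) ≫ (𝟙 A + σ) = 𝟙 A := by
      simp only [Preadditive.sub_comp, Preadditive.comp_add, id_comp, comp_id, hσσ]
      abel
    have hinv₂ : (𝟙 A + σ) ≫ (𝟙 A - σ) = 𝟙 A := by
      simp only [Preadditive.add_comp, Preadditive.comp_sub, id_comp, comp_id, hσσ]
      abel
    refine ⟨A, Y'', X'', vt, wt, g', g'', f', f'', O₁.m₁, O₁.m₃,
      O₂.m₁ ≫ (𝟙 A - σ), (𝟙 A + σ) ≫ O₂.m₃, hA, hg, hf,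
      ⟨O₁.comm₁, O₁.comm₂, O₁.comm₃, O₁.comm₄.symm, O₁.mem⟩, ⟨?_, ?_, ?_, ?_, ?_⟩, ?_⟩
    · show f' ≫ (O₂.m₁ ≫ (𝟙 A - σ)) = u' ≫ vt
      have hv : vt ≫ (𝟙 A - σ) = vt := by
        rw [Preadditive.comp_sub, comp_id, hvtσ, sub_zero]
      rw [← assoc, hO₂m₁, assoc, hv]
    · show (O₂.m₁ ≫ (𝟙 A - σ)) ≫ wt = f''
      have hw : (𝟙 A - σ) ≫ wt = wt := by
        rw [Preadditive.sub_comp, id_comp, hσwt, sub_zero]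
      rw [assoc, hw, hO₂m₂]
    · show vt ≫ ((𝟙 A + σ) ≫ O₂.m₃) = v'
      have hv : vt ≫ (𝟙 A + σ) = vt := by
        rw [Preadditive.comp_add, comp_id, hvtσ, add_zero]
      rw [← assoc, hv, hO₂m₃]
    · show ((𝟙 A + σ) ≫ O₂.m₃) ≫ w' = wt ≫ f⟦(1 : ℤ)⟧'
      have hw : (𝟙 A + σ) ≫ wt = wt := by
        rw [Preadditive.add_comp, id_comp, hσwt, add_zero]
      rw [assoc, ← hO₂m₄, ← assoc, hw]
    · refine isomorphic_distinguished _ O₂.mem _ ?_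
      refine Triangle.isoMk _ _ (Iso.refl _) (Iso.mk (𝟙 A + σ) (𝟙 A - σ) hinv₂ hinv₁)
        (Iso.refl _) ?_ ?_ ?_
      · show (O₂.m₁ ≫ (𝟙 A - σ)) ≫ (𝟙 A + σ) = 𝟙 X'' ≫ O₂.m₁
        rw [assoc, hinv₁, comp_id, id_comp]
      · show ((𝟙 A + σ) ≫ O₂.m₃) ≫ 𝟙 Z' = (𝟙 A + σ) ≫ O₂.m₃
        rw [comp_id]
      · show (w' ≫ f'⟦(1 : ℤ)⟧') ≫ (𝟙 X'')⟦(1 : ℤ)⟧' = 𝟙 Z' ≫ (w' ≫ f'⟦(1 : ℤ)⟧')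
        simp
    · have key : O₁.m₁ ≫ σ ≫ O₂.m₃ = w ≫ θ ≫ v' := by
        rw [hσ]
        simp only [assoc]
        rw [hO₂m₃]
        simp only [← assoc]
        rw [hO₁m₂]
      show h = O₁.m₁ ≫ ((𝟙 A + σ) ≫ O₂.m₃)
      rw [Preadditive.add_comp, id_comp, Preadditive.comp_add, key, hθ]
      abel
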